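/- Let (Ω, 𝓕, ℙ) be a probability space endowed with a filtration (𝓕_t)_{t ∈ [0,T]}, let V be a complete normed vector space, and let m ∈ [1, ∞). Let A : Δ → L^m(Ω; V), (s,t) ↦ A_{s,t}, be a two-parameter family of V-valued random variables such that each A_{s,t} is 𝓕_t-measurable, the map (s,t) ↦ A_{s,t} is continuous from Δ into L^m(Ω; V), and there exist a constant C ≥ 0 and exponents α, β > 0 with α + β > 1 such that ‖A_{s,t} − A_{s,u} − A_{u,t}‖_{L^m} ≤ C (t − u)^α (u − s)^β for all 0 ≤ s ≤ u ≤ t ≤ T. Then there exists a process 𝓐 : [0,T] → L^m(Ω; V) with 𝓐_0 = 0, 𝓐_t being 𝓕_t-measurable for each t, and a constant K depending only on α and β, such that ‖(𝓐_t − 𝓐_s) − A_{s,t}‖_{L^m} ≤ K C (t − s)^{α+β} for all 0 ≤ s ≤ t ≤ T; the process 𝓐 is unique up to modification among adapted processes with these properties; moreover, for every sequence of partitions π of [0,T] whose mesh tends to 0, one has sup_{t ∈ [0,T]} ‖𝓐_t − Σ_{[u,v] ∈ π, u ≤ t} A_{u, v ∧ t}‖_{L^m} → 0. -/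

import Mathlib

/-!
Young's point-removal argument: a partition of `[s, t]` into `N + 1` intervals has an inner point
whose two adjacent intervals have total length at most `2 (t - s) / N`, and deleting it changes
the Riemann sum of `A` by at most `C (2 (t - s) / N) ^ (α + β)`. Removing the points one by one,
every Riemann sum over `[s, t]` is within `K C (t - s) ^ (α + β)` of `A s t`, with
`K = ∑ (2 / j) ^ (α + β) < ∞`. Through a common refinement, two Riemann sums over the same interval
then differ by at most `K C ∑ |I| ^ (α + β)`, summed over the intervals `I` of both partitions,
which tends to `0` with the mesh; so Riemann sums converge in the Banach space `L^m(Ω; V)`, where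
`A` is extended from `0 ≤ s ≤ t ≤ T` to all times by clamping them to `[0, T]`. Their limit along
partitions of `[0, t]` is `𝓐_t`. It is adapted because the `ℱ_t`-measurable classes
form a closed subspace of `L^m`, and two processes with the sewing bound agree, by telescoping
along partitions of vanishing mesh.
-/

open MeasureTheory Filter Set Topology
open scoped ENNReal

theorem cauchySeq_of_dist_le_add {X : Type*} [PseudoMetricSpace X] {s : ℕ → X} {g : ℕ → ℝ}
    (h : ∀ n m, dist (s n) (s m) ≤ g n + g m) (hg : Tendsto g atTop (𝓝 0)) : CauchySeq s := by
  refine Metric.cauchySeq_iff'.2 fun ε hε => ?_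
  obtain ⟨N, hN⟩ := eventually_atTop.1 (hg.eventually (gt_mem_nhds (half_pos hε)))
  exact ⟨N, fun n hn => (h n N).trans_lt (by linarith [hN n hn, hN N le_rfl])⟩

theorem exists_pos_mul_rpow_le (a : ℝ) {q ε : ℝ} (hq : 0 < q) (hε : 0 < ε) :
    ∃ δ > 0, a * δ ^ q ≤ ε := by
  have h : Tendsto (fun δ : ℝ => a * δ ^ q) (𝓝[>] 0) (𝓝 0) := by
    simpa [Real.zero_rpow hq.ne'] using ((Real.continuousAt_rpow_const 0 q
      (Or.inr hq.le)).tendsto.mono_left nhdsWithin_le_nhds).const_mul a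
  obtain ⟨δ, hδε, hδ⟩ := ((h.eventually (ge_mem_nhds hε)).and self_mem_nhdsWithin).exists
  exact ⟨δ, hδ, hδε⟩

namespace MeasureTheory

variable {Ω : Type*} {m0 : MeasurableSpace Ω} {V : Type*} [NormedAddCommGroup V] {p : ℝ≥0∞}
  {μ : Measure Ω}

variable (p μ) in
noncomputable def toLpOrZero (f : Ω → V) : Lp V p μ :=
  open Classical in if h : MemLp f p μ then h.toLp f else 0

theorem toLpOrZero_ae_eq {f : Ω → V} (hf : MemLp f p μ) : toLpOrZero p μ f =ᵐ[μ] f := by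
  rw [toLpOrZero, dif_pos hf]
  exact hf.coeFn_toLp

theorem toLpOrZero_zero : toLpOrZero p μ (0 : Ω → V) = 0 := by
  rw [toLpOrZero, dif_pos MemLp.zero, MemLp.toLp_zero]

theorem eLpNorm_eq_ofReal_norm {f : Lp V p μ} {F : Ω → V} (h : f =ᵐ[μ] F) :
    eLpNorm F p μ = ENNReal.ofReal ‖f‖ := by
  rw [Lp.norm_def, ENNReal.ofReal_toReal (Lp.eLpNorm_ne_top f)]
  exact (eLpNorm_congr_ae h).symm

theorem eLpNorm_sub_sub_eq {f g h : Lp V p μ} {F G H : Ω → V} (hf : f =ᵐ[μ] F) (hg : g =ᵐ[μ] G)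
    (hh : h =ᵐ[μ] H) : eLpNorm (fun ω => F ω - G ω - H ω) p μ = ENNReal.ofReal ‖f - g - h‖ :=
  eLpNorm_eq_ofReal_norm <| (Lp.coeFn_sub _ _).trans <|
    ((Lp.coeFn_sub _ _).trans (hf.sub hg)).sub hh

theorem eLpNorm_sub_sum_eq {ι : Type*} (s : Finset ι) {f : Lp V p μ} {g : ι → Lp V p μ}
    {F : Ω → V} {G : ι → Ω → V} (hf : f =ᵐ[μ] F) (hg : ∀ i ∈ s, g i =ᵐ[μ] G i) :
    eLpNorm (fun ω => F ω - ∑ i ∈ s, G i ω) p μ = ENNReal.ofReal ‖f - ∑ i ∈ s, g i‖ := by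
  refine eLpNorm_eq_ofReal_norm <| (Lp.coeFn_sub _ _).trans <|
    hf.sub <| (Lp.coeFn_finsetSum _ _).trans <| (eventuallyEq_sum hg).trans ?_
  exact Eventually.of_forall fun ω => Finset.sum_apply _ _ _

theorem exists_stronglyMeasurable_ae_eq {m : ℝ → MeasurableSpace Ω} {T : ℝ} {I : ℝ → Lp V p μ}
    (hI0 : I 0 = 0) (hI : ∀ t, 0 ≤ t → t ≤ T → AEStronglyMeasurable[m t] (I t) μ) :
    ∃ X : ℝ → Ω → V, X 0 = 0 ∧
      ∀ t, 0 ≤ t → t ≤ T → StronglyMeasurable[m t] (X t) ∧ X t =ᵐ[μ] I t := by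
  classical
  refine ⟨fun t => if h : t ≠ 0 ∧ 0 ≤ t ∧ t ≤ T then (hI t h.2.1 h.2.2).mk else 0, by simp,
    fun t ht htT => ?_⟩
  by_cases h0 : t = 0
  · subst h0
    exact ⟨by simpa using stronglyMeasurable_zero, by simpa [hI0] using (Lp.coeFn_zero V p μ).symm⟩
  · simp only [dif_pos (⟨h0, ht, htT⟩ : t ≠ 0 ∧ 0 ≤ t ∧ t ≤ T)]
    exact ⟨(hI t ht htT).stronglyMeasurable_mk, (hI t ht htT).ae_eq_mk.symm⟩

end MeasureTheory

namespace Sewing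

section Partition

variable {M : Type*}

def riemannSum [AddCommMonoid M] (F : ℝ → ℝ → M) (N : ℕ) (u : ℕ → ℝ) : M :=
  ∑ j ∈ Finset.range N, F (u j) (u (j + 1))

theorem riemannSum_snoc [AddCommMonoid M] (F : ℝ → ℝ → M) (N : ℕ) (u : ℕ → ℝ) (t : ℝ) :
    riemannSum F (N + 1) (fun j => if j ≤ N then u j else t) = riemannSum F N u + F (u N) t := by
  rw [riemannSum, Finset.sum_range_succ, if_pos le_rfl, if_neg (by omega)]
  congr 1
  refine Finset.sum_congr rfl fun j hj => ?_
  rw [Finset.mem_range] at hj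
  rw [if_pos (by omega), if_pos (by omega)]

theorem riemannSum_eq_merge_add [AddCommGroup M] (F : ℝ → ℝ → M) (u : ℕ → ℝ) {k N : ℕ}
    (hk : k ≤ N) :
    riemannSum F (N + 2) u = riemannSum F (N + 1) (fun j => u (if j ≤ k then j else j + 1))
      + (F (u k) (u (k + 1)) + F (u (k + 1)) (u (k + 2)) - F (u k) (u (k + 2))) := by
  obtain ⟨r, rfl⟩ := Nat.exists_eq_add_of_le hk
  rw [show k + r + 2 = (k + 2) + r by omega, show k + r + 1 = (k + 1) + r by omega]
  simp only [riemannSum, Finset.sum_range_add, Finset.sum_range_succ]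
  have hlow : ∀ j ∈ Finset.range k, F (u (if j ≤ k then j else j + 1))
      (u (if j + 1 ≤ k then j + 1 else j + 1 + 1)) = F (u j) (u (j + 1)) := by
    intro j hj
    rw [Finset.mem_range] at hj
    rw [if_pos (by omega), if_pos (by omega)]
  have hhigh : ∀ x ∈ Finset.range r, F (u (if k + 1 + x ≤ k then k + 1 + x else k + 1 + x + 1))
      (u (if k + 1 + x + 1 ≤ k then k + 1 + x + 1 else k + 1 + x + 1 + 1))
      = F (u (k + 2 + x)) (u (k + 2 + x + 1)) := by
    intro x _
    rw [if_neg (by omega), if_neg (by omega)]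
    congr 2 <;> omega
  rw [Finset.sum_congr rfl hlow, Finset.sum_congr rfl hhigh, if_pos le_rfl, if_neg (by omega)]
  abel

theorem riemannSum_eq_sum_blocks [AddCommMonoid M] (F : ℝ → ℝ → M) (w : ℕ → ℝ) {φ : ℕ → ℕ}
    (hφ : Monotone φ) (hφ0 : φ 0 = 0) (N : ℕ) :
    riemannSum F (φ N) w
      = ∑ j ∈ Finset.range N, riemannSum F (φ (j + 1) - φ j) (fun i => w (φ j + i)) := by
  induction N with
  | zero => simp [riemannSum, hφ0]
  | succ N ih =>
    rw [Finset.sum_range_succ, ← ih, riemannSum, riemannSum, riemannSum,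
      ← Finset.sum_range_add_sum_Ico _ (hφ N.le_succ), Finset.sum_Ico_eq_sum_range]
    rfl

theorem riemannSum_rpow_le {c δ : ℝ} (hc : 1 ≤ c) {N : ℕ} {u : ℕ → ℝ} (hu : Monotone u)
    (hmesh : ∀ j < N, u (j + 1) - u j ≤ δ) :
    riemannSum (fun a b => (b - a) ^ c) N u ≤ δ ^ (c - 1) * (u N - u 0) := by
  rw [← Finset.sum_range_sub u, Finset.mul_sum]
  refine Finset.sum_le_sum fun j hj => ?_
  have hd : 0 ≤ u (j + 1) - u j := sub_nonneg.2 (hu j.le_succ)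
  calc (u (j + 1) - u j) ^ c = (u (j + 1) - u j) ^ (c - 1) * (u (j + 1) - u j) := by
        rw [← Real.rpow_add_one' hd (by linarith), sub_add_cancel]
    _ ≤ δ ^ (c - 1) * (u (j + 1) - u j) := by
        gcongr
        exact hmesh j (Finset.mem_range.1 hj)

theorem exists_gap_le {N : ℕ} (hN : N ≠ 0) {u : ℕ → ℝ} (hu : Monotone u) :
    ∃ k < N, u (k + 2) - u k ≤ 2 * (u (N + 1) - u 0) / N := by
  have hsum : ∑ k ∈ Finset.range N, (u (k + 2) - u k)
      ≤ ∑ _k ∈ Finset.range N, 2 * (u (N + 1) - u 0) / N := by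
    have h1 := Finset.sum_range_sub (fun k => u (k + 1)) N
    have h2 := Finset.sum_range_sub u N
    have : u 0 ≤ u 1 := hu zero_le_one
    have : u N ≤ u (N + 1) := hu N.le_succ
    rw [Finset.sum_const, Finset.card_range, nsmul_eq_mul,
      mul_div_cancel₀ _ (by exact_mod_cast hN)]
    calc ∑ k ∈ Finset.range N, (u (k + 2) - u k)
        = ∑ k ∈ Finset.range N, (u (k + 1 + 1) - u (k + 1))
          + ∑ k ∈ Finset.range N, (u (k + 1) - u k) := by
          rw [← Finset.sum_add_distrib]; exact Finset.sum_congr rfl fun k _ => by ring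
      _ ≤ 2 * (u (N + 1) - u 0) := by rw [h1, h2]; linarith
  obtain ⟨k, hk, hle⟩ := Finset.exists_le_of_sum_le (Finset.nonempty_range_iff.2 hN) hsum
  exact ⟨k, Finset.mem_range.1 hk, hle⟩

def Refines (w : ℕ → ℝ) (L : ℕ) (u : ℕ → ℝ) (N : ℕ) : Prop :=
  ∃ φ : ℕ → ℕ, Monotone φ ∧ φ 0 = 0 ∧ φ N = L ∧ ∀ j ≤ N, w (φ j) = u j

theorem refines_of_orderIso {P : Finset ℝ} {n : ℕ} (hn : 0 < n) (e : Fin n ≃o P) {u : ℕ → ℝ}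
    {N : ℕ} (hu : Monotone u) (huP : ∀ j ≤ N, u j ∈ P) (hbound : ∀ y ∈ P, u 0 ≤ y ∧ y ≤ u N) :
    Refines (fun i => e ⟨min i (n - 1), by omega⟩) (n - 1) u N := by
  let x : ℕ → P := fun j => ⟨u (min j N), huP _ (min_le_right j N)⟩
  have hx : Monotone x := fun a b hab => hu (min_le_min_right N hab)
  refine ⟨fun j => e.symm (x j), fun a b hab => e.symm.monotone (hx hab), ?_, ?_, fun j hj => ?_⟩
  · have : e.symm (x 0) ≤ ⟨0, hn⟩ := by
      rw [OrderIso.symm_apply_le]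
      exact (hbound _ (e _).2).1
    exact Nat.le_zero.1 this
  · have h1 : (⟨n - 1, by omega⟩ : Fin n) ≤ e.symm (x N) := by
      rw [OrderIso.le_symm_apply]
      change (e _ : ℝ) ≤ u (min N N)
      rw [min_self]
      exact (hbound _ (e _).2).2
    have h2 := (e.symm (x N)).isLt
    change n - 1 ≤ (e.symm (x N) : ℕ) at h1
    show (e.symm (x N) : ℕ) = n - 1
    omega
  · have h2 := (e.symm (x j)).isLt
    have : (⟨min (e.symm (x j) : ℕ) (n - 1), by omega⟩ : Fin n) = e.symm (x j) :=
      Fin.ext (min_eq_left (by omega))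
    show ((e _ : P) : ℝ) = u j
    rw [this, OrderIso.apply_symm_apply]
    simp only [x, min_eq_left hj]

theorem exists_common_refinement {u v : ℕ → ℝ} {N M : ℕ} (hu : Monotone u) (hv : Monotone v)
    (h0 : u 0 = v 0) (hN : u N = v M) :
    ∃ (L : ℕ) (w : ℕ → ℝ), Monotone w ∧ Refines w L u N ∧ Refines w L v M := by
  classical
  set P := (Finset.range (N + 1)).image u ∪ (Finset.range (M + 1)).image v
  have huP : ∀ j ≤ N, u j ∈ P := fun j hj =>
    Finset.mem_union_left _ (Finset.mem_image_of_mem u (Finset.mem_range.2 (by omega)))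
  have hvP : ∀ j ≤ M, v j ∈ P := fun j hj =>
    Finset.mem_union_right _ (Finset.mem_image_of_mem v (Finset.mem_range.2 (by omega)))
  have hbound : ∀ y ∈ P, u 0 ≤ y ∧ y ≤ u N := by
    intro y hy
    rcases Finset.mem_union.1 hy with h | h <;> obtain ⟨j, hj, rfl⟩ := Finset.mem_image.1 h <;>
      rw [Finset.mem_range] at hj
    · exact ⟨hu (Nat.zero_le j), hu (by omega)⟩
    · rw [h0, hN]; exact ⟨hv (Nat.zero_le j), hv (by omega)⟩
  have hn : 0 < P.card := Finset.card_pos.2 ⟨u 0, huP 0 (Nat.zero_le N)⟩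
  set e := P.orderIsoOfFin rfl
  refine ⟨P.card - 1, fun i => e ⟨min i (P.card - 1), by omega⟩, fun a b hab => ?_,
    refines_of_orderIso hn e hu huP hbound,
    refines_of_orderIso hn e hv hvP (by rwa [← h0, ← hN])⟩
  exact e.monotone (show (⟨min a _, _⟩ : Fin _) ≤ ⟨min b _, _⟩ from min_le_min_right _ hab)

noncomputable def uniformPartition (t : ℝ) (n j : ℕ) : ℝ := t * (min j (n + 1) : ℕ) / (n + 1)

variable {t : ℝ} {n : ℕ}

@[simp] theorem uniformPartition_zero : uniformPartition t n 0 = 0 := by simp [uniformPartition]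

@[simp] theorem uniformPartition_last : uniformPartition t n (n + 1) = t := by
  simp [uniformPartition, mul_div_assoc, div_self (by positivity : (n + 1 : ℝ) ≠ 0)]

theorem uniformPartition_mem_Icc (ht : 0 ≤ t) (j : ℕ) : uniformPartition t n j ∈ Icc 0 t := by
  refine ⟨by unfold uniformPartition; positivity, ?_⟩
  rw [uniformPartition, div_le_iff₀ (by positivity)]
  have : ((min j (n + 1) : ℕ) : ℝ) ≤ n + 1 := by exact_mod_cast min_le_right j (n + 1)
  exact mul_le_mul_of_nonneg_left this ht

theorem monotone_uniformPartition (ht : 0 ≤ t) : Monotone (uniformPartition t n) := by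
  intro a b hab
  unfold uniformPartition
  gcongr

theorem uniformPartition_succ_sub {j : ℕ} (hj : j ≤ n) :
    uniformPartition t n (j + 1) - uniformPartition t n j = t / (n + 1) := by
  simp only [uniformPartition, min_eq_left (by omega : j + 1 ≤ n + 1),
    min_eq_left (by omega : j ≤ n + 1)]
  push_cast
  ring

theorem tendsto_riemannSum_rpow_uniformPartition (ht : 0 ≤ t) {c : ℝ} (hc : 1 < c) :
    Tendsto (fun n => riemannSum (fun a b => (b - a) ^ c) (n + 1) (uniformPartition t n))
      atTop (𝓝 0) := by
  have hmesh : Tendsto (fun n : ℕ => t / (n + 1)) atTop (𝓝 0) := by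
    simpa [div_eq_mul_one_div t] using tendsto_one_div_add_atTop_nhds_zero_nat.const_mul t
  have hbound : Tendsto (fun n : ℕ => (t / (n + 1)) ^ (c - 1) * t) atTop (𝓝 0) := by
    have := ((Real.continuousAt_rpow_const 0 (c - 1) (Or.inr (by linarith))).tendsto.comp
      hmesh).mul_const t
    simpa [Real.zero_rpow (by linarith : c - 1 ≠ 0)] using this
  refine tendsto_of_tendsto_of_tendsto_of_le_of_le tendsto_const_nhds hbound
    (fun n => Finset.sum_nonneg fun j _ => ?_) (fun n => ?_)
  · exact Real.rpow_nonneg (sub_nonneg.2 (monotone_uniformPartition ht j.le_succ)) c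
  · have := riemannSum_rpow_le hc.le (N := n + 1) (monotone_uniformPartition ht (n := n))
      (fun j hj => (uniformPartition_succ_sub (t := t) (by omega : j ≤ n)).le)
    simpa using this

end Partition

section SewingBound

variable {E : Type*} [NormedAddCommGroup E] {A : ℝ → ℝ → E} {C α β : ℝ}

def SewingBound (A : ℝ → ℝ → E) (C α β : ℝ) : Prop :=
  ∀ ⦃s u t : ℝ⦄, s ≤ u → u ≤ t → ‖A s t - A s u - A u t‖ ≤ C * (t - u) ^ α * (u - s) ^ β

theorem sewingBound_comp_projIcc {T : ℝ} (hT : 0 ≤ T) (hα : 0 ≤ α) (hβ : 0 ≤ β) (hC : 0 ≤ C)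
    (hA : ∀ s u t, 0 ≤ s → s ≤ u → u ≤ t → t ≤ T →
      ‖A s t - A s u - A u t‖ ≤ C * (t - u) ^ α * (u - s) ^ β) :
    SewingBound (fun s t => A (projIcc 0 T hT s) (projIcc 0 T hT t)) C α β := by
  intro s u t hsu hut
  have hmono : Monotone fun x => (projIcc 0 T hT x : ℝ) := fun a b hab => monotone_projIcc hT hab
  have hlip : ∀ a b, a ≤ b → (projIcc 0 T hT b : ℝ) - projIcc 0 T hT a ≤ b - a :=
    fun a b hab => (le_abs_self _).trans
      (abs_projIcc_sub_projIcc hT |>.trans_eq (abs_of_nonneg (sub_nonneg.2 hab)))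
  refine (hA _ _ _ (projIcc 0 T hT s).2.1 (hmono hsu) (hmono hut) (projIcc 0 T hT t).2.2).trans ?_
  have h1 := sub_nonneg.2 (hmono hut)
  have h2 := sub_nonneg.2 (hmono hsu)
  gcongr C * ?_ ^ α * ?_ ^ β
  · exact hlip u t hut
  · exact hlip s u hsu

theorem SewingBound.apply_self (hA : SewingBound A C α β) (hα : α ≠ 0) (t : ℝ) : A t t = 0 := by
  simpa [Real.zero_rpow hα] using hA (le_refl t) (le_refl t)

theorem SewingBound.norm_sub_sub_le (hA : SewingBound A C α β) (hα : 0 < α) (hβ : 0 < β)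
    (hC : 0 ≤ C) {s u t : ℝ} (hsu : s ≤ u) (hut : u ≤ t) :
    ‖A s t - A s u - A u t‖ ≤ C * (t - s) ^ (α + β) := by
  refine (hA hsu hut).trans ?_
  rw [mul_assoc, Real.rpow_add' (by linarith) (by linarith)]
  have hts : 0 ≤ t - s := by linarith
  gcongr

theorem SewingBound.norm_riemannSum_sub_le_sum (hA : SewingBound A C α β) (hα : 0 < α)
    (hβ : 0 < β) (hC : 0 ≤ C) (N : ℕ) {u : ℕ → ℝ} (hu : Monotone u) :
    ‖riemannSum A (N + 1) u - A (u 0) (u (N + 1))‖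
      ≤ C * (u (N + 1) - u 0) ^ (α + β) * ∑ j ∈ Finset.range N, (2 / (j + 1 : ℝ)) ^ (α + β) := by
  induction N generalizing u with
  | zero => simp [riemannSum]
  | succ N ih =>
    obtain ⟨k, hk, hgap⟩ := exists_gap_le N.succ_ne_zero hu
    set u' : ℕ → ℝ := fun j => u (if j ≤ k then j else j + 1)
    have hu' : Monotone u' := fun a b hab => hu (by split_ifs <;> omega)
    have hu'0 : u' 0 = u 0 := by simp [u']
    have hu'N : u' (N + 1) = u (N + 1 + 1) := by simp [u', show ¬ N + 1 ≤ k by omega]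
    set D := u (N + 1 + 1) - u 0
    have hD : 0 ≤ D := sub_nonneg.2 (hu (Nat.zero_le _))
    have hsplit : riemannSum A (N + 2) u - A (u 0) (u (N + 2))
        = (riemannSum A (N + 1) u' - A (u' 0) (u' (N + 1)))
          - (A (u k) (u (k + 2)) - A (u k) (u (k + 1)) - A (u (k + 1)) (u (k + 2))) := by
      rw [riemannSum_eq_merge_add A u (by omega : k ≤ N), hu'0, hu'N]
      abel
    have hmerge : ‖A (u k) (u (k + 2)) - A (u k) (u (k + 1)) - A (u (k + 1)) (u (k + 2))‖
        ≤ C * D ^ (α + β) * (2 / (N + 1 : ℝ)) ^ (α + β) := by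
      refine (hA.norm_sub_sub_le hα hβ hC (hu k.le_succ) (hu (k + 1).le_succ)).trans ?_
      rw [mul_assoc, ← Real.mul_rpow hD (by positivity)]
      gcongr
      · exact sub_nonneg.2 (hu (by omega))
      · convert hgap using 1; push_cast; ring
    calc _ = ‖(riemannSum A (N + 1) u' - A (u' 0) (u' (N + 1)))
          - (A (u k) (u (k + 2)) - A (u k) (u (k + 1)) - A (u (k + 1)) (u (k + 2)))‖ := by
          rw [← hsplit]
      _ ≤ C * D ^ (α + β) * ∑ j ∈ Finset.range N, (2 / (j + 1 : ℝ)) ^ (α + β)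
          + C * D ^ (α + β) * (2 / (N + 1 : ℝ)) ^ (α + β) := by
          refine (norm_sub_le _ _).trans (add_le_add ?_ hmerge)
          simpa only [hu'0, hu'N] using ih hu'
      _ = _ := by rw [Finset.sum_range_succ, mul_add]

noncomputable def sewingConst (c : ℝ) : ℝ := ∑' j : ℕ, (2 / (j + 1 : ℝ)) ^ c

theorem summable_sewingConst {c : ℝ} (hc : 1 < c) :
    Summable fun j : ℕ => (2 / (j + 1 : ℝ)) ^ c := by
  have h := (summable_nat_add_iff 1).2 (Real.summable_nat_rpow_inv.2 hc)
  refine (h.mul_left (2 ^ c)).congr fun j => ?_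
  rw [Real.div_rpow (by norm_num) (by positivity), div_eq_mul_inv]
  push_cast
  rfl

theorem sewingConst_pos {c : ℝ} (hc : 1 < c) : 0 < sewingConst c :=
  (summable_sewingConst hc).tsum_pos (fun _ => by positivity) 0 (by positivity)

theorem SewingBound.norm_riemannSum_sub_le (hA : SewingBound A C α β) (hα : 0 < α) (hβ : 0 < β)
    (hαβ : 1 < α + β) (hC : 0 ≤ C) (N : ℕ) {u : ℕ → ℝ} (hu : Monotone u) :
    ‖riemannSum A N u - A (u 0) (u N)‖ ≤ sewingConst (α + β) * C * (u N - u 0) ^ (α + β) := by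
  cases N with
  | zero => simp [riemannSum, hA.apply_self hα.ne', Real.zero_rpow (by linarith : α + β ≠ 0)]
  | succ N =>
    refine (hA.norm_riemannSum_sub_le_sum hα hβ hC N hu).trans ?_
    have hD : 0 ≤ u (N + 1) - u 0 := sub_nonneg.2 (hu (Nat.zero_le _))
    have := (summable_sewingConst hαβ).sum_le_tsum (Finset.range N) (fun _ _ => by positivity)
    calc _ ≤ C * (u (N + 1) - u 0) ^ (α + β) * sewingConst (α + β) := by gcongr; exact this
      _ = _ := by ring

theorem SewingBound.norm_riemannSum_sub_riemannSum_le_of_refines (hA : SewingBound A C α β)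
    (hα : 0 < α) (hβ : 0 < β) (hαβ : 1 < α + β) (hC : 0 ≤ C) {w u : ℕ → ℝ} {L N : ℕ}
    (hw : Monotone w) (href : Refines w L u N) :
    ‖riemannSum A L w - riemannSum A N u‖
      ≤ sewingConst (α + β) * C * riemannSum (fun a b => (b - a) ^ (α + β)) N u := by
  obtain ⟨φ, hφ, hφ0, rfl, hwφ⟩ := href
  rw [riemannSum_eq_sum_blocks A w hφ hφ0 N, riemannSum, riemannSum, Finset.mul_sum,
    ← Finset.sum_sub_distrib]
  refine (norm_sum_le _ _).trans (Finset.sum_le_sum fun j hj => ?_)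
  rw [Finset.mem_range] at hj
  have := hA.norm_riemannSum_sub_le hα hβ hαβ hC (φ (j + 1) - φ j) (u := fun i => w (φ j + i))
    fun a b hab => hw (by omega)
  simpa [Nat.add_sub_cancel' (hφ j.le_succ), hwφ j (by omega), hwφ (j + 1) (by omega)] using this

theorem SewingBound.norm_riemannSum_sub_riemannSum_le (hA : SewingBound A C α β) (hα : 0 < α)
    (hβ : 0 < β) (hαβ : 1 < α + β) (hC : 0 ≤ C) {u v : ℕ → ℝ} {N M : ℕ} (hu : Monotone u)
    (hv : Monotone v) (h0 : u 0 = v 0) (hN : u N = v M) :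
    ‖riemannSum A N u - riemannSum A M v‖ ≤ sewingConst (α + β) * C *
      (riemannSum (fun a b => (b - a) ^ (α + β)) N u
        + riemannSum (fun a b => (b - a) ^ (α + β)) M v) := by
  obtain ⟨L, w, hw, hwu, hwv⟩ := exists_common_refinement hu hv h0 hN
  rw [mul_add]
  refine (norm_sub_le_norm_sub_add_norm_sub _ (riemannSum A L w) _).trans (add_le_add ?_ ?_)
  · rw [norm_sub_rev]
    exact hA.norm_riemannSum_sub_riemannSum_le_of_refines hα hβ hαβ hC hw hwu
  · exact hA.norm_riemannSum_sub_riemannSum_le_of_refines hα hβ hαβ hC hw hwv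

theorem norm_sub_sub_riemannSum_le {X : ℝ → E} {K c : ℝ} {N : ℕ} {u : ℕ → ℝ}
    (hX : ∀ j < N, ‖X (u (j + 1)) - X (u j) - A (u j) (u (j + 1))‖ ≤ K * (u (j + 1) - u j) ^ c) :
    ‖X (u N) - X (u 0) - riemannSum A N u‖ ≤ K * riemannSum (fun a b => (b - a) ^ c) N u := by
  rw [← Finset.sum_range_sub (fun j => X (u j)), riemannSum, ← Finset.sum_sub_distrib,
    riemannSum, Finset.mul_sum]
  exact (norm_sum_le _ _).trans (Finset.sum_le_sum fun j hj => hX j (Finset.mem_range.1 hj))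

noncomputable def sewingMap (A : ℝ → ℝ → E) (t : ℝ) : E :=
  limUnder atTop fun n => riemannSum A (n + 1) (uniformPartition t n)

variable [CompleteSpace E]

theorem SewingBound.tendsto_sewingMap (hA : SewingBound A C α β) (hα : 0 < α) (hβ : 0 < β)
    (hαβ : 1 < α + β) (hC : 0 ≤ C) {t : ℝ} (ht : 0 ≤ t) :
    Tendsto (fun n => riemannSum A (n + 1) (uniformPartition t n)) atTop
      (𝓝 (sewingMap A t)) := by
  refine tendsto_nhds_limUnder (cauchySeq_tendsto_of_complete (cauchySeq_of_dist_le_add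
    (g := fun n => sewingConst (α + β) * C *
      riemannSum (fun a b => (b - a) ^ (α + β)) (n + 1) (uniformPartition t n))
    (fun n m => ?_) ?_))
  · rw [dist_eq_norm, ← mul_add]
    exact hA.norm_riemannSum_sub_riemannSum_le hα hβ hαβ hC (monotone_uniformPartition ht)
      (monotone_uniformPartition ht) (by simp) (by simp)
  · simpa using (tendsto_riemannSum_rpow_uniformPartition ht hαβ).const_mul
      (sewingConst (α + β) * C)

theorem SewingBound.sewingMap_zero (hA : SewingBound A C α β) (hα : 0 < α) (hβ : 0 < β)
    (hαβ : 1 < α + β) (hC : 0 ≤ C) : sewingMap A 0 = 0 := by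
  refine tendsto_nhds_unique (hA.tendsto_sewingMap hα hβ hαβ hC le_rfl) ?_
  simp [riemannSum, uniformPartition, hA.apply_self hα.ne']

theorem SewingBound.norm_sewingMap_sub_riemannSum_le (hA : SewingBound A C α β) (hα : 0 < α)
    (hβ : 0 < β) (hαβ : 1 < α + β) (hC : 0 ≤ C) {t : ℝ} (ht : 0 ≤ t) {N : ℕ} {u : ℕ → ℝ}
    (hu : Monotone u) (hu0 : u 0 = 0) (huN : u N = t) :
    ‖sewingMap A t - riemannSum A N u‖
      ≤ sewingConst (α + β) * C * riemannSum (fun a b => (b - a) ^ (α + β)) N u := by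
  have hlim := (tendsto_riemannSum_rpow_uniformPartition ht hαβ).add_const
    (riemannSum (fun a b => (b - a) ^ (α + β)) N u) |>.const_mul (sewingConst (α + β) * C)
  rw [zero_add] at hlim
  refine le_of_tendsto_of_tendsto' ((hA.tendsto_sewingMap hα hβ hαβ hC ht).sub_const _).norm
    hlim fun n => ?_
  exact hA.norm_riemannSum_sub_riemannSum_le hα hβ hαβ hC (monotone_uniformPartition ht) hu
    (by simp [hu0]) (by simp [huN])

theorem SewingBound.norm_sewingMap_sub_sewingMap_sub_le (hA : SewingBound A C α β) (hα : 0 < α)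
    (hβ : 0 < β) (hαβ : 1 < α + β) (hC : 0 ≤ C) {s t : ℝ} (hs : 0 ≤ s) (hst : s ≤ t) :
    ‖sewingMap A t - sewingMap A s - A s t‖ ≤ sewingConst (α + β) * C * (t - s) ^ (α + β) := by
  set K := sewingConst (α + β) * C
  set g := fun n => riemannSum (fun a b => (b - a) ^ (α + β)) (n + 1) (uniformPartition s n)
  set v := fun n j => if j ≤ n + 1 then uniformPartition s n j else t
  have hv : ∀ n, Monotone (v n) := fun n a b hab => by
    simp only [v]
    split_ifs with ha hb hb
    · exact monotone_uniformPartition hs hab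
    · exact (uniformPartition_mem_Icc hs a).2.trans hst
    · omega
    · exact le_rfl
  have hbound : ∀ n,
      ‖sewingMap A t - sewingMap A s - A s t‖ ≤ K * ((t - s) ^ (α + β) + 2 * g n) := by
    intro n
    have h1 := hA.norm_sewingMap_sub_riemannSum_le hα hβ hαβ hC (hs.trans hst) (hv n)
      (by simp [v]) (by simp [v] : v n (n + 1 + 1) = t)
    have h2 := hA.norm_sewingMap_sub_riemannSum_le hα hβ hαβ hC hs
      (monotone_uniformPartition hs) uniformPartition_zero (uniformPartition_last (n := n))
    simp only [v, riemannSum_snoc, uniformPartition_last] at h1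
    calc _ = ‖(sewingMap A t - (riemannSum A (n + 1) (uniformPartition s n) + A s t))
          - (sewingMap A s - riemannSum A (n + 1) (uniformPartition s n))‖ := by
          congr 1; abel
      _ ≤ K * (g n + (t - s) ^ (α + β)) + K * g n :=
          (norm_sub_le _ _).trans (add_le_add h1 h2)
      _ = _ := by ring
  have hlim : Tendsto (fun n => K * ((t - s) ^ (α + β) + 2 * g n)) atTop
      (𝓝 (K * (t - s) ^ (α + β))) := by
    simpa using ((tendsto_riemannSum_rpow_uniformPartition hs hαβ).const_mul 2).const_add
      ((t - s) ^ (α + β)) |>.const_mul K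
  exact ge_of_tendsto' hlim hbound

theorem SewingBound.eq_sewingMap (hA : SewingBound A C α β) (hα : 0 < α) (hβ : 0 < β)
    (hαβ : 1 < α + β) (hC : 0 ≤ C) {X : ℝ → E} {K T : ℝ} (hX0 : X 0 = 0)
    (hX : ∀ s t, 0 ≤ s → s ≤ t → t ≤ T → ‖X t - X s - A s t‖ ≤ K * (t - s) ^ (α + β))
    {t : ℝ} (ht : 0 ≤ t) (htT : t ≤ T) : X t = sewingMap A t := by
  set g := fun n => riemannSum (fun a b => (b - a) ^ (α + β)) (n + 1) (uniformPartition t n)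
  have hbound : ∀ n, ‖X t - sewingMap A t‖ ≤ (K + sewingConst (α + β) * C) * g n := by
    intro n
    have hmem := uniformPartition_mem_Icc (n := n) ht
    have h1 := norm_sub_sub_riemannSum_le (A := A) (X := X) (K := K) (N := n + 1)
      (u := uniformPartition t n) fun j _ => hX _ _ (hmem j).1
        (monotone_uniformPartition ht j.le_succ) ((hmem _).2.trans htT)
    have h2 := hA.norm_sewingMap_sub_riemannSum_le hα hβ hαβ hC ht
      (monotone_uniformPartition ht) uniformPartition_zero (uniformPartition_last (n := n))
    simp only [uniformPartition_last, uniformPartition_zero, hX0, sub_zero] at h1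
    calc _ ≤ ‖X t - riemannSum A (n + 1) (uniformPartition t n)‖
          + ‖riemannSum A (n + 1) (uniformPartition t n) - sewingMap A t‖ :=
          norm_sub_le_norm_sub_add_norm_sub _ _ _
      _ ≤ _ := by rw [norm_sub_rev (riemannSum _ _ _), add_mul]; exact add_le_add h1 h2
  have hlim := (tendsto_riemannSum_rpow_uniformPartition ht hαβ).const_mul
    (K + sewingConst (α + β) * C)
  rw [mul_zero] at hlim
  exact sub_eq_zero.1 (norm_le_zero_iff.1 (ge_of_tendsto' hlim hbound))

theorem SewingBound.norm_sewingMap_sub_sum_ite_le (hA : SewingBound A C α β) (hα : 0 < α)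
    (hβ : 0 < β) (hαβ : 1 < α + β) (hC : 0 ≤ C) {t δ : ℝ} (ht : 0 ≤ t) {N : ℕ} {u : ℕ → ℝ}
    (hu0 : u 0 = 0) (htN : t ≤ u N) (hmono : ∀ i < N, u i ≤ u (i + 1))
    (hmesh : ∀ i < N, u (i + 1) - u i ≤ δ) :
    ‖sewingMap A t - ∑ i ∈ Finset.range N, if u i ≤ t then A (u i) (min (u (i + 1)) t) else 0‖
      ≤ sewingConst (α + β) * C * (δ ^ (α + β - 1) * t) := by
  set v := fun i => min (u (min i N)) t
  have hv : Monotone v := by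
    refine monotone_nat_of_le_succ fun i => min_le_min_right t ?_
    rcases lt_or_ge i N with h | h
    · rw [min_eq_left h.le, min_eq_left h]; exact hmono i h
    · rw [min_eq_right h, min_eq_right (by omega)]
  have hsum : riemannSum A N v
      = ∑ i ∈ Finset.range N, if u i ≤ t then A (u i) (min (u (i + 1)) t) else 0 := by
    refine Finset.sum_congr rfl fun i hi => ?_
    rw [Finset.mem_range] at hi
    simp only [v, min_eq_left hi.le, min_eq_left (Nat.succ_le_of_lt hi)]
    split_ifs with h
    · rw [min_eq_left h]
    · have h' : t ≤ u (i + 1) := (not_le.1 h).le.trans (hmono i hi)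
      rw [min_eq_right (not_le.1 h).le, min_eq_right h', hA.apply_self hα.ne']
  have hvmesh : ∀ i < N, v (i + 1) - v i ≤ δ := by
    intro i hi
    simp only [v, min_eq_left hi.le, min_eq_left (Nat.succ_le_of_lt hi)]
    refine le_trans ?_ (hmesh i hi)
    rcases le_total (u i) t with h | h <;> rcases le_total (u (i + 1)) t with h' | h' <;>
      simp only [min_eq_left, min_eq_right, h, h'] <;> linarith [hmono i hi]
  have hv0 : v 0 = 0 := by simp [v, hu0, ht]
  have hvN : v N = t := by simp [v, htN]
  rw [← hsum]
  refine (hA.norm_sewingMap_sub_riemannSum_le hα hβ hαβ hC ht hv hv0 hvN).trans ?_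
  have := riemannSum_rpow_le hαβ.le hv hvmesh
  rw [hv0, hvN, sub_zero] at this
  have hK : 0 ≤ sewingConst (α + β) * C := mul_nonneg (sewingConst_pos hαβ).le hC
  gcongr

end SewingBound

section Lp

variable {Ω : Type*} {m0 : MeasurableSpace Ω} {V : Type*} [NormedAddCommGroup V] {p : ℝ≥0∞}
  {μ : Measure Ω} {T : ℝ} {A : ℝ → ℝ → Ω → V} {C α β : ℝ}

variable (p μ) in
noncomputable def liftLp (hT : 0 ≤ T) (A : ℝ → ℝ → Ω → V) (s t : ℝ) : Lp V p μ :=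
  toLpOrZero p μ (A (projIcc 0 T hT s) (projIcc 0 T hT t))

theorem liftLp_ae_eq (hT : 0 ≤ T) (hA : ∀ s t, 0 ≤ s → s ≤ t → t ≤ T → MemLp (A s t) p μ)
    {s t : ℝ} (hs : 0 ≤ s) (hst : s ≤ t) (htT : t ≤ T) : liftLp p μ hT A s t =ᵐ[μ] A s t := by
  rw [liftLp, projIcc_of_mem hT ⟨hs, hst.trans htT⟩, projIcc_of_mem hT ⟨hs.trans hst, htT⟩]
  exact toLpOrZero_ae_eq (hA s t hs hst htT)

variable [Fact (1 ≤ p)]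

theorem sewingBound_liftLp (hT : 0 ≤ T) (hα : 0 ≤ α) (hβ : 0 ≤ β) (hC : 0 ≤ C)
    (hA : ∀ s t, 0 ≤ s → s ≤ t → t ≤ T → MemLp (A s t) p μ)
    (hsew : ∀ s u t : ℝ, 0 ≤ s → s ≤ u → u ≤ t → t ≤ T →
      eLpNorm (fun ω => A s t ω - A s u ω - A u t ω) p μ
        ≤ ENNReal.ofReal (C * (t - u) ^ α * (u - s) ^ β)) :
    SewingBound (liftLp p μ hT A) C α β := by
  refine sewingBound_comp_projIcc (A := fun s t => toLpOrZero p μ (A s t)) hT hα hβ hC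
    fun s u t hs hsu hut htT => ?_
  have h := hsew s u t hs hsu hut htT
  rw [eLpNorm_sub_sub_eq (toLpOrZero_ae_eq (hA s t hs (hsu.trans hut) htT))
    (toLpOrZero_ae_eq (hA s u hs hsu (hut.trans htT)))
    (toLpOrZero_ae_eq (hA u t (hs.trans hsu) hut htT))] at h
  exact (ENNReal.ofReal_le_ofReal_iff (mul_nonneg (mul_nonneg hC
    (Real.rpow_nonneg (sub_nonneg.2 hut) _)) (Real.rpow_nonneg (sub_nonneg.2 hsu) _))).1 h

variable [CompleteSpace V]

theorem aestronglyMeasurable_sewingMap_liftLp (hT : 0 ≤ T) {ℱ : Filtration ℝ m0}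
    (hA : ∀ s t, 0 ≤ s → s ≤ t → t ≤ T → StronglyMeasurable[ℱ t] (A s t) ∧ MemLp (A s t) p μ)
    (hsew : SewingBound (liftLp p μ hT A) C α β) (hα : 0 < α) (hβ : 0 < β) (hαβ : 1 < α + β)
    (hC : 0 ≤ C) {t : ℝ} (ht : 0 ≤ t) (htT : t ≤ T) :
    AEStronglyMeasurable[ℱ t] ⇑(sewingMap (liftLp p μ hT A) t) μ := by
  refine (isClosed_aestronglyMeasurable (ℱ.le t)).mem_of_tendsto
    (hsew.tendsto_sewingMap hα hβ hαβ hC ht) (Eventually.of_forall fun n =>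
      mem_lpMeasSubgroup_iff_aestronglyMeasurable.1 (AddSubgroup.sum_mem _ fun j _ =>
        mem_lpMeasSubgroup_iff_aestronglyMeasurable.2 ?_))
  obtain ⟨ha, -⟩ := uniformPartition_mem_Icc (n := n) ht j
  obtain ⟨-, hbt⟩ := uniformPartition_mem_Icc (n := n) ht (j + 1)
  have hab := monotone_uniformPartition (n := n) ht j.le_succ
  exact ((hA _ _ ha hab (hbt.trans htT)).1.mono (ℱ.mono hbt)).aestronglyMeasurable.congr
    (liftLp_ae_eq hT (fun s t hs hst htT => (hA s t hs hst htT).2) ha hab (hbt.trans htT)).symm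

theorem ae_eq_sewingMap_liftLp (hT : 0 ≤ T)
    (hA : ∀ s t, 0 ≤ s → s ≤ t → t ≤ T → MemLp (A s t) p μ)
    (hsew : SewingBound (liftLp p μ hT A) C α β) (hα : 0 < α) (hβ : 0 < β) (hαβ : 1 < α + β)
    (hC : 0 ≤ C) {Y : ℝ → Ω → V} {K : ℝ} (hK : 0 ≤ K) (hY0 : Y 0 = 0)
    (hYm : ∀ t, 0 ≤ t → t ≤ T → AEStronglyMeasurable (Y t) μ)
    (hY : ∀ s t, 0 ≤ s → s ≤ t → t ≤ T →
      eLpNorm (fun ω => Y t ω - Y s ω - A s t ω) p μ ≤ ENNReal.ofReal (K * (t - s) ^ (α + β)))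
    {t : ℝ} (ht : 0 ≤ t) (htT : t ≤ T) :
    Y t =ᵐ[μ] ⇑(sewingMap (liftLp p μ hT A) t) := by
  have hYmem : ∀ t, 0 ≤ t → t ≤ T → MemLp (Y t) p μ := fun t ht htT => by
    have hincr : MemLp (fun ω => Y t ω - Y 0 ω - A 0 t ω) p μ :=
      ⟨((hYm t ht htT).sub (hYm 0 le_rfl hT)).sub (hA 0 t le_rfl ht htT).1,
        (hY 0 t le_rfl ht htT).trans_lt ENNReal.ofReal_lt_top⟩
    convert hincr.add (hA 0 t le_rfl ht htT) using 1
    ext ω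
    simp [hY0]
  have heq := hsew.eq_sewingMap hα hβ hαβ hC (X := fun t => toLpOrZero p μ (Y t)) (K := K)
    (by simp [hY0, toLpOrZero_zero]) (fun s t hs hst htT => ?_) ht htT
  · exact (toLpOrZero_ae_eq (hYmem t ht htT)).symm.trans (by rw [heq])
  · have h := hY s t hs hst htT
    rw [eLpNorm_sub_sub_eq (toLpOrZero_ae_eq (hYmem t (hs.trans hst) htT))
      (toLpOrZero_ae_eq (hYmem s hs (hst.trans htT))) (liftLp_ae_eq hT hA hs hst htT)] at h
    exact (ENNReal.ofReal_le_ofReal_iff (by positivity)).1 h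

theorem eLpNorm_sub_sum_ite_le (hT : 0 ≤ T)
    (hA : ∀ s t, 0 ≤ s → s ≤ t → t ≤ T → MemLp (A s t) p μ)
    (hsew : SewingBound (liftLp p μ hT A) C α β) (hα : 0 < α) (hβ : 0 < β) (hαβ : 1 < α + β)
    (hC : 0 ≤ C) {X : Ω → V} {t δ : ℝ} (ht : 0 ≤ t) (htT : t ≤ T)
    (hX : X =ᵐ[μ] ⇑(sewingMap (liftLp p μ hT A) t)) {N : ℕ} {u : ℕ → ℝ} (hu0 : u 0 = 0)
    (htN : t ≤ u N) (hmono : ∀ i < N, u i ≤ u (i + 1)) (hmesh : ∀ i < N, u (i + 1) - u i ≤ δ) :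
    eLpNorm (fun ω => X ω -
        ∑ i ∈ Finset.range N, (if u i ≤ t then A (u i) (min (u (i + 1)) t) ω else 0)) p μ
      ≤ ENNReal.ofReal (sewingConst (α + β) * C * (δ ^ (α + β - 1) * t)) := by
  have hu_nonneg : ∀ i ≤ N, 0 ≤ u i := by
    intro i hi
    induction i with
    | zero => exact hu0.ge
    | succ i ih => exact (ih (by omega)).trans (hmono i (by omega))
  rw [eLpNorm_sub_sum_eq _ hX.symm (g := fun i =>
    if u i ≤ t then liftLp p μ hT A (u i) (min (u (i + 1)) t) else 0) fun i hi => ?_]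
  · exact ENNReal.ofReal_le_ofReal
      (hsew.norm_sewingMap_sub_sum_ite_le hα hβ hαβ hC ht hu0 htN hmono hmesh)
  · rw [Finset.mem_range] at hi
    split_ifs with h
    · exact liftLp_ae_eq hT hA (hu_nonneg i hi.le) (le_min (hmono i hi) h)
        ((min_le_right _ _).trans htT)
    · exact Lp.coeFn_zero _ _ _

end Lp

end Sewing

open Sewing

theorem sewing_lemma_Lm (α β : ℝ) (hα : 0 < α) (hβ : 0 < β) (hαβ : 1 < α + β) :
    ∃ K : ℝ, 0 < K ∧
      ∀ (Ω : Type) [m0 : MeasurableSpace Ω] (ℙ : Measure Ω) [IsProbabilityMeasure ℙ]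
        (ℱ : Filtration ℝ m0)
        (V : Type) [NormedAddCommGroup V] [NormedSpace ℝ V] [CompleteSpace V]
        (T : ℝ), 0 < T →
      ∀ (m : ℝ), 1 ≤ m →
      ∀ (A : ℝ → ℝ → Ω → V) (C : ℝ), 0 ≤ C →
      -- adaptedness and `L^m`-integrability of each `A_{s,t}`
      (∀ s t : ℝ, 0 ≤ s → s ≤ t → t ≤ T →
          StronglyMeasurable[ℱ t] (A s t) ∧ MemLp (A s t) (ENNReal.ofReal m) ℙ) →
      -- continuity of `(s,t) ↦ A_{s,t}` into `L^m`
      (∀ s t : ℝ, 0 ≤ s → s ≤ t → t ≤ T → ∀ ε : ℝ, 0 < ε →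
          ∃ δ : ℝ, 0 < δ ∧ ∀ s' t' : ℝ, 0 ≤ s' → s' ≤ t' → t' ≤ T →
            |s' - s| < δ → |t' - t| < δ →
            eLpNorm (fun ω => A s t ω - A s' t' ω) (ENNReal.ofReal m) ℙ
              < ENNReal.ofReal ε) →
      -- the sewing bound
      (∀ s u t : ℝ, 0 ≤ s → s ≤ u → u ≤ t → t ≤ T →
          eLpNorm (fun ω => A s t ω - A s u ω - A u t ω) (ENNReal.ofReal m) ℙ
            ≤ ENNReal.ofReal (C * (t - u) ^ α * (u - s) ^ β)) →
      ∃ 𝓐 : ℝ → Ω → V,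
        𝓐 0 = 0 ∧
        (∀ t : ℝ, 0 ≤ t → t ≤ T →
            StronglyMeasurable[ℱ t] (𝓐 t) ∧ MemLp (𝓐 t) (ENNReal.ofReal m) ℙ) ∧
        (∀ s t : ℝ, 0 ≤ s → s ≤ t → t ≤ T →
            eLpNorm (fun ω => 𝓐 t ω - 𝓐 s ω - A s t ω) (ENNReal.ofReal m) ℙ
              ≤ ENNReal.ofReal (K * C * (t - s) ^ (α + β))) ∧
        -- uniqueness up to modification among adapted processes with these properties
        (∀ 𝓐' : ℝ → Ω → V,
            𝓐' 0 = 0 →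
            (∀ t : ℝ, 0 ≤ t → t ≤ T → StronglyMeasurable[ℱ t] (𝓐' t)) →
            (∀ s t : ℝ, 0 ≤ s → s ≤ t → t ≤ T →
                eLpNorm (fun ω => 𝓐' t ω - 𝓐' s ω - A s t ω) (ENNReal.ofReal m) ℙ
                  ≤ ENNReal.ofReal (K * C * (t - s) ^ (α + β))) →
            ∀ t : ℝ, 0 ≤ t → t ≤ T → 𝓐 t =ᵐ[ℙ] 𝓐' t) ∧
        -- convergence of Riemann sums along partitions of vanishing mesh
        (∀ ε : ℝ, 0 < ε → ∃ δ : ℝ, 0 < δ ∧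
            ∀ (N : ℕ) (u : ℕ → ℝ), u 0 = 0 → u N = T →
              (∀ i < N, u i < u (i + 1)) →
              (∀ i < N, u (i + 1) - u i ≤ δ) →
              ∀ t : ℝ, 0 ≤ t → t ≤ T →
                eLpNorm (fun ω => 𝓐 t ω -
                    ∑ i ∈ Finset.range N,
                      (if u i ≤ t then A (u i) (min (u (i + 1)) t) ω else 0))
                  (ENNReal.ofReal m) ℙ ≤ ENNReal.ofReal ε) := by
  refine ⟨sewingConst (α + β), sewingConst_pos hαβ, ?_⟩
  intro Ω m0 ℙ _ ℱ V _ _ _ T hT m hm A C hC hA _ hsew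
  have : Fact (1 ≤ ENNReal.ofReal m) := ⟨by simpa using ENNReal.ofReal_le_ofReal hm⟩
  have hmem s t hs hst htT := (hA s t hs hst htT).2
  have hK : 0 ≤ sewingConst (α + β) * C := mul_nonneg (sewingConst_pos hαβ).le hC
  have hlift := sewingBound_liftLp hT.le hα.le hβ.le hC hmem hsew
  obtain ⟨X, hX0, hX⟩ := exists_stronglyMeasurable_ae_eq (m := fun t => ℱ t)
    (hlift.sewingMap_zero hα hβ hαβ hC)
    fun t ht htT => aestronglyMeasurable_sewingMap_liftLp hT.le hA hlift hα hβ hαβ hC ht htT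
  refine ⟨X, hX0, fun t ht htT => ⟨(hX t ht htT).1, (Lp.memLp _).ae_eq (hX t ht htT).2.symm⟩,
    fun s t hs hst htT => ?_, fun X' hX'0 hX'm hX' t ht htT => ?_, fun ε hε => ?_⟩
  · rw [eLpNorm_sub_sub_eq (hX t (hs.trans hst) htT).2.symm (hX s hs (hst.trans htT)).2.symm
      (liftLp_ae_eq hT.le hmem hs hst htT)]
    exact ENNReal.ofReal_le_ofReal (hlift.norm_sewingMap_sub_sewingMap_sub_le hα hβ hαβ hC hs hst)
  · exact (hX t ht htT).2.trans (ae_eq_sewingMap_liftLp hT.le hmem hlift hα hβ hαβ hC hK hX'0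
      (fun t ht htT => ((hX'm t ht htT).mono (ℱ.le t)).aestronglyMeasurable) hX' ht htT).symm
  · obtain ⟨δ, hδ, hδε⟩ := exists_pos_mul_rpow_le (sewingConst (α + β) * C * T)
      (by linarith : 0 < α + β - 1) hε
    refine ⟨δ, hδ, fun N u hu0 huN hu hmesh t ht htT => (eLpNorm_sub_sum_ite_le hT.le hmem hlift
      hα hβ hαβ hC ht htT (hX t ht htT).2 hu0 (huN ▸ htT) (fun i hi => (hu i hi).le) hmesh).trans
      (ENNReal.ofReal_le_ofReal ?_)⟩
    calc _ ≤ sewingConst (α + β) * C * T * δ ^ (α + β - 1) := by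
          rw [mul_comm (δ ^ _) t, ← mul_assoc]; gcongr
      _ ≤ ε := hδε
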